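/- With K(τ,ω) as above and z satisfying (1/t)∫_0^t z(θ_η ω)dη → 0 and |z(θ_t ω)|/|t| → 0 as t → ±∞, and f backward tempered, one has e^{−(νλ₁/3)t} K(−1, θ_{−t}ω) → 0 as t → +∞. -/

import Mathlib

/-!
Along the orbit of `ω`, sublinear growth of `z` and of its primitive means that for every
`ε > 0` both are bounded by `ε |r| + C`. After the shift `θ_{ρ-t} ω = θ_ρ (θ_{-t} ω)` the
exponent in `K(-1, θ_{-t} ω)` is therefore at most `(νλ₁/2) ρ + (νλ₁/4) t + C` for `ρ ≤ 0`,
`t ≥ 0` and small `ε`, and temperedness of `f` bounds the remaining supremum uniformly in `t`.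
So `K(-1, θ_{-t} ω) = O(e^{(νλ₁/4) t})`, which loses against `e^{-(νλ₁/3) t}`.
-/

open Filter MeasureTheory Set Topology

lemma exists_norm_le_mul_norm_add_of_tendsto_cocompact {E F : Type*} [NormedAddCommGroup E]
    [NormedAddCommGroup F] {g : E → F} (hg : Continuous g)
    (h : Tendsto (fun x => ‖g x‖ / ‖x‖) (cocompact E) (𝓝 0)) {ε : ℝ} (hε : 0 < ε) :
    ∃ C, ∀ x, ‖g x‖ ≤ ε * ‖x‖ + C := by
  have hev : ∀ᶠ x in cocompact E, ‖g x‖ ≤ ε * ‖x‖ := by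
    filter_upwards [h.eventually (gt_mem_nhds hε), isCompact_singleton.compl_mem_cocompact]
      with x hlt hx
    have hx : 0 < ‖x‖ := norm_pos_iff.mpr hx
    exact ((div_lt_iff₀ hx).mp hlt).le
  obtain ⟨t, ht, hsub⟩ := mem_cocompact.mp hev
  obtain ⟨C, hC⟩ := ht.exists_bound_of_continuousOn hg.continuousOn
  refine ⟨max C 0, fun x => ?_⟩
  by_cases hx : x ∈ t
  · linarith [hC x hx, le_max_left C 0, mul_nonneg hε.le (norm_nonneg x)]
  · linarith [show ‖g x‖ ≤ ε * ‖x‖ from hsub hx, le_max_right C 0]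

lemma tendsto_abs_div_abs_of_tendsto_one_div_mul {F : ℝ → ℝ} {l : Filter ℝ}
    (h : Tendsto (fun r => 1 / r * F r) l (𝓝 0)) :
    Tendsto (fun r => |F r| / |r|) l (𝓝 0) := by
  simpa only [one_div_mul_eq_div, abs_div, abs_zero] using h.abs

lemma setIntegral_Iic_comp_add_right {E : Type*} [NormedAddCommGroup E] [NormedSpace ℝ E]
    (g : ℝ → E) (s : ℝ) : ∫ ρ in Iic 0, g (ρ + s) = ∫ ξ in Iic s, g ξ := by
  simpa using (measurePreserving_add_right volume s).setIntegral_preimage_emb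
    (measurableEmbedding_addRight s) g (Iic s)

lemma add_abs_add_integral_le_of_sublinear {g : ℝ → ℝ} (hg : Continuous g)
    {a σ ε C₁ C₂ t ρ : ℝ} (hσ : 0 ≤ σ) (hε : 0 ≤ ε) (ha : 8 * ε * (1 + 2 * σ) = a)
    (hC₁ : ∀ r, |g r| ≤ ε * |r| + C₁) (hC₂ : ∀ r, |∫ η in (0 : ℝ)..r, g η| ≤ ε * |r| + C₂)
    (ht : 0 ≤ t) (hρ : ρ ≤ 0) :
    a * ρ + 2 * |g (ρ - t)| + 2 * σ * ∫ η in ρ..0, g (η - t) ≤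
      a / 2 * ρ + (2 * C₁ + 4 * σ * C₂ + a / 4 * t) := by
  set Z : ℝ → ℝ := fun r => ∫ η in (0 : ℝ)..r, g η
  have hshift : ∫ η in ρ..0, g (η - t) = Z (-t) - Z (ρ - t) := by
    rw [intervalIntegral.integral_comp_sub_right, zero_sub,
      intervalIntegral.integral_interval_sub_left (hg.intervalIntegrable _ _)
        (hg.intervalIntegrable _ _)]
  have hρt : |ρ - t| = t - ρ := by rw [abs_of_nonpos (by linarith), neg_sub]
  have hZ : Z (-t) - Z (ρ - t) ≤ ε * (2 * t - ρ) + 2 * C₂ := by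
    have h₁ := hC₂ (-t)
    have h₂ := hC₂ (ρ - t)
    rw [abs_neg, abs_of_nonneg ht] at h₁
    rw [hρt] at h₂
    linarith [le_abs_self (Z (-t)), neg_abs_le (Z (ρ - t))]
  have hg' : |g (ρ - t)| ≤ ε * (t - ρ) + C₁ := hρt ▸ hC₁ (ρ - t)
  rw [hshift]
  nlinarith [mul_le_mul_of_nonneg_left hZ (by positivity : (0 : ℝ) ≤ 2 * σ),
    mul_nonneg (mul_nonneg hε hσ) (neg_nonneg.mpr hρ), mul_nonneg hε (neg_nonneg.mpr hρ)]

lemma setIntegral_Iic_exp_mul_comp_add_le {φ h : ℝ → ℝ} {γ c s : ℝ} (hh : ∀ ξ, 0 ≤ h ξ)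
    (hφ : ∀ ρ ≤ 0, φ ρ ≤ γ * ρ + c)
    (hint : IntegrableOn (fun ξ => Real.exp (γ * (ξ - s)) * h ξ) (Iic s)) :
    ∫ ρ in Iic 0, Real.exp (φ ρ) * h (ρ + s) ≤
      Real.exp c * ∫ ξ in Iic s, Real.exp (γ * (ξ - s)) * h ξ := by
  have hcomp := setIntegral_Iic_comp_add_right (fun ξ => Real.exp (φ (ξ - s)) * h ξ) s
  simp only [add_sub_cancel_right] at hcomp
  rw [hcomp, ← integral_const_mul]
  refine integral_mono_of_nonneg (ae_of_all _ fun ξ => mul_nonneg (Real.exp_pos _).le (hh ξ))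
    (hint.const_mul _)
    ((ae_restrict_iff' measurableSet_Iic).mpr (ae_of_all _ fun ξ hξ => ?_))
  have hle : φ (ξ - s) ≤ c + γ * (ξ - s) := by linarith [hφ (ξ - s) (sub_nonpos.mpr hξ)]
  calc Real.exp (φ (ξ - s)) * h ξ ≤ Real.exp (c + γ * (ξ - s)) * h ξ := by gcongr; exact hh ξ
    _ = Real.exp c * (Real.exp (γ * (ξ - s)) * h ξ) := by rw [Real.exp_add, mul_assoc]

lemma setIntegral_exp_shift_le {Ω H : Type*} [NormedAddCommGroup H] {θ : ℝ → Ω → Ω}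
    (hθ : ∀ a b : ℝ, ∀ x : Ω, θ a (θ b x) = θ (a + b) x) {z : Ω → ℝ} {ω : Ω}
    (hz : Continuous fun r : ℝ => z (θ r ω)) {f : ℝ → H} {a σ ε C₁ C₂ t s : ℝ}
    (hσ : 0 ≤ σ) (hε : 0 ≤ ε) (ha : 8 * ε * (1 + 2 * σ) = a)
    (hC₁ : ∀ r, |z (θ r ω)| ≤ ε * |r| + C₁)
    (hC₂ : ∀ r, |∫ η in (0 : ℝ)..r, z (θ η ω)| ≤ ε * |r| + C₂) (ht : 0 ≤ t)
    (hf : IntegrableOn (fun ξ => Real.exp (a / 2 * (ξ - s)) * ‖f ξ‖ ^ 2) (Iic s)) :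
    ∫ ρ in Iic 0, Real.exp (a * ρ + 2 * |z (θ ρ (θ (-t) ω))| +
        2 * σ * ∫ η in ρ..0, z (θ η (θ (-t) ω))) * ‖f (ρ + s)‖ ^ 2 ≤
      Real.exp (2 * C₁ + 4 * σ * C₂ + a / 4 * t) *
        ∫ ξ in Iic s, Real.exp (a / 2 * (ξ - s)) * ‖f ξ‖ ^ 2 := by
  simp only [hθ, ← sub_eq_add_neg]
  exact setIntegral_Iic_exp_mul_comp_add_le (fun _ => sq_nonneg _)
    (fun ρ hρ => add_abs_add_integral_le_of_sublinear hz hσ hε ha hC₁ hC₂ ht hρ) hf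

lemma sSup_exists_le_eq_mem_Icc {ι : Type*} [Preorder ι] {F : ι → ℝ} {τ : ι} {B : ℝ}
    (h : ∀ s ≤ τ, F s ∈ Icc 0 B) : sSup {x | ∃ s ≤ τ, x = F s} ∈ Icc 0 B := by
  refine ⟨Real.sSup_nonneg ?_, csSup_le ⟨_, τ, le_rfl, rfl⟩ ?_⟩ <;>
    rintro _ ⟨s, hs, rfl⟩
  exacts [(h s hs).1, (h s hs).2]

lemma tendsto_exp_neg_mul_mul_of_le_mul_exp {u : ℝ → ℝ} {a b B : ℝ} (hab : b < a)
    (hu : ∀ᶠ t in atTop, 0 ≤ u t ∧ u t ≤ B * Real.exp (b * t)) :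
    Tendsto (fun t => Real.exp (-a * t) * u t) atTop (𝓝 0) := by
  have hlim : Tendsto (fun t => B * Real.exp ((b - a) * t)) atTop (𝓝 0) := by
    simpa using (Real.tendsto_exp_atBot.comp
      (tendsto_id.const_mul_atTop_of_neg (sub_neg.mpr hab))).const_mul B
  refine tendsto_of_tendsto_of_tendsto_of_le_of_le' tendsto_const_nhds hlim ?_ ?_
  · filter_upwards [hu] with t ht
    exact mul_nonneg (Real.exp_pos _).le ht.1
  · filter_upwards [hu] with t ht
    calc Real.exp (-a * t) * u t ≤ Real.exp (-a * t) * (B * Real.exp (b * t)) := by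
          gcongr; exact ht.2
      _ = B * Real.exp ((b - a) * t) := by
          rw [mul_left_comm, ← Real.exp_add]; ring_nf

theorem stmt14_general {H Ω : Type*} [NormedAddCommGroup H]
    (ν lam σ : ℝ) (hν : 0 < ν) (hlam : 0 < lam) (hσ : 0 < σ)
    (θ : ℝ → Ω → Ω) (hθ : ∀ a b : ℝ, ∀ x : Ω, θ a (θ b x) = θ (a + b) x)
    (z : Ω → ℝ) (ω : Ω) (f : ℝ → H)
    (hzcont : Continuous fun r : ℝ => z (θ r ω))
    (hzgrow_top : Tendsto (fun r : ℝ => |z (θ r ω)| / |r|) atTop (nhds 0))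
    (hzgrow_bot : Tendsto (fun r : ℝ => |z (θ r ω)| / |r|) atBot (nhds 0))
    (hzavg_top : Tendsto (fun r : ℝ => (1 / r) * ∫ ξ in (0 : ℝ)..r, z (θ ξ ω))
      atTop (nhds 0))
    (hzavg_bot : Tendsto (fun r : ℝ => (1 / r) * ∫ ξ in (0 : ℝ)..r, z (θ ξ ω))
      atBot (nhds 0))
    -- `f` is backward tempered:
    (hftemp_int : ∀ γ : ℝ, 0 < γ → ∀ s : ℝ,
      IntegrableOn (fun ξ => Real.exp (γ * (ξ - s)) * ‖f ξ‖ ^ 2) (Set.Iic s))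
    (hftemp_bdd : ∀ γ : ℝ, 0 < γ → ∀ τ : ℝ,
      BddAbove {a : ℝ | ∃ s ≤ τ,
        a = ∫ ξ in Set.Iic s, Real.exp (γ * (ξ - s)) * ‖f ξ‖ ^ 2})
    -- `K(τ, ω')`
    (K : ℝ → Ω → ℝ)
    (hK : ∀ (τ : ℝ) (ω' : Ω), K τ ω' = sSup {a : ℝ | ∃ s ≤ τ,
      a = ∫ ρ in Set.Iic (0 : ℝ), Real.exp (ν * lam * ρ + 2 * |z (θ ρ ω')| +
        2 * σ * ∫ η in ρ..(0 : ℝ), z (θ η ω')) * ‖f (ρ + s)‖ ^ 2}) :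
    Tendsto (fun t : ℝ => Real.exp (-(ν * lam / 3) * t) * K (-1) (θ (-t) ω))
      atTop (nhds 0) := by
  set a := ν * lam
  have ha : 0 < a := mul_pos hν hlam
  -- chosen so that the exponent grows in `t` at rate `2ε(1 + 2σ) = a/4 < a/3`
  set ε := a / (8 * (1 + 2 * σ))
  have hε : 0 < ε := by positivity
  have hεa : 8 * ε * (1 + 2 * σ) = a := by simp only [ε]; field_simp
  obtain ⟨C₁, hC₁⟩ := exists_norm_le_mul_norm_add_of_tendsto_cocompact hzcont
    (by rw [cocompact_eq_atBot_atTop]; exact hzgrow_bot.sup hzgrow_top) hε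
  obtain ⟨C₂, hC₂⟩ := exists_norm_le_mul_norm_add_of_tendsto_cocompact
    (intervalIntegral.continuous_primitive hzcont.intervalIntegrable 0)
    (by rw [cocompact_eq_atBot_atTop]
        exact (tendsto_abs_div_abs_of_tendsto_one_div_mul hzavg_bot).sup
          (tendsto_abs_div_abs_of_tendsto_one_div_mul hzavg_top)) hε
  simp only [Real.norm_eq_abs] at hC₁ hC₂
  obtain ⟨M, hM⟩ := hftemp_bdd (a / 2) (by positivity) (-1)
  refine tendsto_exp_neg_mul_mul_of_le_mul_exp (b := a / 4)
    (B := Real.exp (2 * C₁ + 4 * σ * C₂) * M) (by linarith) ?_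
  filter_upwards [eventually_ge_atTop 0] with t ht
  rw [hK]
  refine sSup_exists_le_eq_mem_Icc fun s hs =>
    ⟨setIntegral_nonneg measurableSet_Iic fun ρ _ => by positivity, ?_⟩
  calc _ ≤ Real.exp (2 * C₁ + 4 * σ * C₂ + a / 4 * t) *
        ∫ ξ in Iic s, Real.exp (a / 2 * (ξ - s)) * ‖f ξ‖ ^ 2 :=
        setIntegral_exp_shift_le hθ hzcont hσ.le hε.le hεa hC₁ hC₂ ht
          (hftemp_int _ (by positivity) s)
    _ ≤ Real.exp (2 * C₁ + 4 * σ * C₂ + a / 4 * t) * M := by gcongr; exact hM ⟨s, hs, rfl⟩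
    _ = Real.exp (2 * C₁ + 4 * σ * C₂) * M * Real.exp (a / 4 * t) := by
        rw [Real.exp_add]; ring

/-- Backward decay of the absorbing radius: with
`K(τ,ω') = sup_{s≤τ} ∫_{−∞}^0 e^{νλ₁ρ + 2|z(θ_ρ ω')| + 2σ∫_ρ^0 z(θ_η ω')dη} ‖f(ρ+s)‖² dρ`,
if `z` has sublinear growth and sublinear time averages along the orbit of `ω` and
`f` is backward tempered, then `e^{−(νλ₁/3)t} K(−1, θ_{−t}ω) → 0` as `t → +∞`. -/
theorem stmt14 {H Ω : Type*} [NormedAddCommGroup H]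
    (ν lam σ : ℝ) (hν : 0 < ν) (hlam : 0 < lam) (hσ : 0 < σ)
    (θ : ℝ → Ω → Ω) (hθ : ∀ a b : ℝ, ∀ x : Ω, θ a (θ b x) = θ (a + b) x)
    (z : Ω → ℝ) (ω : Ω) (f : ℝ → H)
    (hzcont : Continuous fun r : ℝ => z (θ r ω))
    (hzgrow_top : Tendsto (fun r : ℝ => |z (θ r ω)| / |r|) atTop (nhds 0))
    (hzgrow_bot : Tendsto (fun r : ℝ => |z (θ r ω)| / |r|) atBot (nhds 0))
    (hzavg_top : Tendsto (fun r : ℝ => (1 / r) * ∫ ξ in (0 : ℝ)..r, z (θ ξ ω))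
      atTop (nhds 0))
    (hzavg_bot : Tendsto (fun r : ℝ => (1 / r) * ∫ ξ in (0 : ℝ)..r, z (θ ξ ω))
      atBot (nhds 0))
    (hfloc : ∀ a b : ℝ, IntegrableOn (fun ξ => ‖f ξ‖ ^ 2) (Set.Icc a b))
    -- `f` is backward tempered:
    (hftemp_int : ∀ γ : ℝ, 0 < γ → ∀ s : ℝ,
      IntegrableOn (fun ξ => Real.exp (γ * (ξ - s)) * ‖f ξ‖ ^ 2) (Set.Iic s))
    (hftemp_bdd : ∀ γ : ℝ, 0 < γ → ∀ τ : ℝ,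
      BddAbove {a : ℝ | ∃ s ≤ τ,
        a = ∫ ξ in Set.Iic s, Real.exp (γ * (ξ - s)) * ‖f ξ‖ ^ 2})
    -- `K(τ, ω')`
    (K : ℝ → Ω → ℝ)
    (hK : ∀ (τ : ℝ) (ω' : Ω), K τ ω' = sSup {a : ℝ | ∃ s ≤ τ,
      a = ∫ ρ in Set.Iic (0 : ℝ), Real.exp (ν * lam * ρ + 2 * |z (θ ρ ω')| +
        2 * σ * ∫ η in ρ..(0 : ℝ), z (θ η ω')) * ‖f (ρ + s)‖ ^ 2}) :
    Tendsto (fun t : ℝ => Real.exp (-(ν * lam / 3) * t) * K (-1) (θ (-t) ω))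
      atTop (nhds 0) :=
  stmt14_general ν lam σ hν hlam hσ θ hθ z ω f hzcont hzgrow_top hzgrow_bot hzavg_top hzavg_bot
    hftemp_int hftemp_bdd K hK
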